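/- arXiv:2510.10714 — 2 statements merged into one kernel-verified Lean document; each statement's English description precedes it below -/
import Mathlib

section
/- If T ≥ (n + ln 2 + ln(1/δ)) / (2ε²) and Φ' consists of T constraints sampled i.i.d. uniformly from an instance Φ on n variables, then with probability at least 1 − δ, simultaneously for all assignments x ∈ {0,1}^n we have |val_{Φ'}(x) − val_Φ(x)| ≤ ε; consequently |maxval(Φ') − maxval(Φ)| ≤ ε with probability at least 1 − δ. -/
/-!
Sampling `σ : Fin T → Fin Φ.length` uniformly makes the indicators `1[x satisfies Φ_{σ i}]`
independent `[0,1]`-valued variables with mean `val_Φ(x)`, so by Hoeffding's inequality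
`|val_{Φ'}(x) - val_Φ(x)| > ε` has probability at most `2 exp(-2Tε²)`. A union bound over the
`2ⁿ` assignments leaves failure probability `2ⁿ⁺¹ exp(-2Tε²) ≤ δ`, and an `ε`-uniform bound on
two functions bounds the difference of their maxima by `ε`.
-/

open MeasureTheory ProbabilityTheory Real Finset
open scoped NNReal

lemma List.length_filter_eq_card_filter_get {C : Type*} (l : List C) (p : C → Bool) :
    (l.filter p).length = #{j : Fin l.length | p (l.get j)} := by
  have := Multiset.coe_countP (fun c => p c = true) (List.ofFn l.get)
  rw [← Fin.univ_val_map, Multiset.countP_map, List.ofFn_get, List.countP_eq_length_filter] at this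
  simpa only [Bool.decide_eq_true, Finset.card_def, Finset.filter_val] using this.symm

lemma abs_ciSup_sub_ciSup_le {ι : Type*} [Finite ι] [Nonempty ι] {u v : ι → ℝ} {ε : ℝ}
    (h : ∀ x, |u x - v x| ≤ ε) : |(⨆ x, u x) - ⨆ x, v x| ≤ ε := by
  have hu : BddAbove (Set.range u) := (Set.finite_range u).bddAbove
  have hv : BddAbove (Set.range v) := (Set.finite_range v).bddAbove
  rw [abs_sub_le_iff]
  constructor
  · refine sub_le_iff_le_add.2 (ciSup_le fun x => ?_)
    linarith [(abs_sub_le_iff.1 (h x)).1, le_ciSup hv x]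
  · refine sub_le_iff_le_add.2 (ciSup_le fun x => ?_)
    linarith [(abs_sub_le_iff.1 (h x)).2, le_ciSup hu x]

lemma two_pow_mul_two_mul_exp_le {n T : ℕ} {ε δ : ℝ} (hε : 0 < ε) (hδ : 0 < δ)
    (hT : ((n : ℝ) + log 2 + log (1 / δ)) / (2 * ε ^ 2) ≤ T) :
    (2 : ℝ) ^ n * (2 * exp (-2 * T * ε ^ 2)) ≤ δ := by
  have hT' : (n : ℝ) + log 2 + log (1 / δ) ≤ 2 * T * ε ^ 2 := by
    rw [div_le_iff₀ (by positivity)] at hT; linarith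
  have hlog2 : (n : ℝ) * log 2 ≤ n :=
    mul_le_of_le_one_right n.cast_nonneg (log_two_lt_d9.le.trans (by norm_num))
  rw [one_div, log_inv] at hT'
  calc (2 : ℝ) ^ n * (2 * exp (-2 * T * ε ^ 2)) = exp (n * log 2 + log 2 - 2 * T * ε ^ 2) := by
        rw [exp_sub, exp_add, exp_nat_mul, exp_log two_pos, div_eq_mul_inv, ← exp_neg]
        ring_nf
    _ ≤ exp (log δ) := exp_le_exp.2 (by linarith)
    _ = δ := exp_log hδ

namespace ProbabilityTheory

lemma uniformOn_univ_real_setOf {Ω : Type*} [Fintype Ω] [MeasurableSpace Ω]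
    [MeasurableSingletonClass Ω] (P : Ω → Prop) [DecidablePred P] :
    (uniformOn .univ).real {ω | P ω} = #{ω | P ω} / Fintype.card Ω := by
  rw [measureReal_def, uniformOn_univ, ← Finset.coe_filter_univ, Measure.count_apply_finset]
  simp

lemma integral_uniformOn_univ {α : Type*} [Fintype α] [MeasurableSpace α]
    [MeasurableSingletonClass α] (f : α → ℝ) :
    ∫ a, f a ∂uniformOn .univ = (∑ a, f a) / Fintype.card α := by
  rw [integral_fintype .of_finite]
  simp [measureReal_def, uniformOn_univ, div_eq_inv_mul, Finset.mul_sum]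

lemma HasSubgaussianMGF.measureReal_le_abs_le {Ω : Type*} [MeasurableSpace Ω] {μ : Measure Ω}
    {X : Ω → ℝ} {c : ℝ≥0} (h : HasSubgaussianMGF X c μ) {t : ℝ} (ht : 0 ≤ t) :
    μ.real {ω | t ≤ |X ω|} ≤ 2 * exp (-t ^ 2 / (2 * c)) := by
  have hsplit : {ω | t ≤ |X ω|} = {ω | t ≤ X ω} ∪ {ω | t ≤ (-X) ω} := by
    ext ω; simp [le_abs', le_neg, or_comm]
  calc μ.real {ω | t ≤ |X ω|} ≤ μ.real {ω | t ≤ X ω} + μ.real {ω | t ≤ (-X) ω} :=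
        hsplit ▸ measureReal_union_le _ _
    _ ≤ exp (-t ^ 2 / (2 * c)) + exp (-t ^ 2 / (2 * c)) :=
        add_le_add (h.measure_ge_le ht) (h.neg.measure_ge_le ht)
    _ = 2 * exp (-t ^ 2 / (2 * c)) := by ring

variable {ι α : Type*} [Fintype ι] [Fintype α] [Nonempty α] [MeasurableSpace α]
  [MeasurableSingletonClass α]

lemma hasSubgaussianMGF_sum_sub_integral_uniformOn {f : α → ℝ} (hf : ∀ a, f a ∈ Set.Icc 0 1) :
    HasSubgaussianMGF (fun ω : ι → α => ∑ i, (f (ω i) - ∫ a, f a ∂uniformOn .univ))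
      (Fintype.card ι / 4) (uniformOn .univ) := by
  set X : α → ℝ := fun a => f a - ∫ a, f a ∂uniformOn .univ
  have hX : HasSubgaussianMGF X (1 / 4) (uniformOn .univ) := by
    convert hasSubgaussianMGF_of_mem_Icc (μ := uniformOn .univ)
      Measurable.of_discrete.aemeasurable (ae_of_all _ hf)
    norm_num
  have hcoord (i : ι) : HasSubgaussianMGF (fun ω : ι → α => X (ω i)) (1 / 4)
      (Measure.pi fun _ => uniformOn .univ) := by
    refine HasSubgaussianMGF.of_map (X := X) (measurable_pi_apply i).aemeasurable ?_
    rwa [(measurePreserving_eval _ i).map_eq]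
  rw [← Set.pi_univ, uniformOn_pi]
  convert HasSubgaussianMGF.sum_of_iIndepFun
    (iIndepFun_pi (X := fun _ => X) fun _ => Measurable.of_discrete.aemeasurable) (s := univ)
    fun i _ => hcoord i
  simp [div_eq_mul_inv]

lemma measureReal_lt_abs_average_sub_integral_le {f : α → ℝ} (hf : ∀ a, f a ∈ Set.Icc 0 1)
    {ε : ℝ} (hε : 0 ≤ ε) :
    (uniformOn .univ).real
        {ω : ι → α | ε < |(∑ i, f (ω i)) / Fintype.card ι - ∫ a, f a ∂uniformOn .univ|}
      ≤ 2 * exp (-2 * Fintype.card ι * ε ^ 2) := by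
  set T : ℝ := (Fintype.card ι : ℝ) with hTdef
  have hsub : {ω : ι → α | ε < |(∑ i, f (ω i)) / T - ∫ a, f a ∂uniformOn .univ|}
      ⊆ {ω | T * ε ≤ |∑ i, (f (ω i) - ∫ a, f a ∂uniformOn .univ)|} := by
    intro ω hω
    rcases eq_or_ne T 0 with hT | hT
    · simp [hT]
    · have hTpos : 0 < T := by positivity
      have hsum : ∑ i, (f (ω i) - ∫ a, f a ∂uniformOn .univ)
          = T * ((∑ i, f (ω i)) / T - ∫ a, f a ∂uniformOn .univ) := by
        rw [Finset.sum_sub_distrib, Finset.sum_const, Finset.card_univ, nsmul_eq_mul, ← hTdef]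
        field_simp
      simp only [Set.mem_ofPred_eq, hsum, abs_mul, abs_of_pos hTpos] at hω ⊢
      exact mul_le_mul_of_nonneg_left hω.le hTpos.le
  calc _ ≤ _ := measureReal_mono hsub
    _ ≤ 2 * exp (-(T * ε) ^ 2 / (2 * ((Fintype.card ι / 4 : ℝ≥0) : ℝ))) :=
        (hasSubgaussianMGF_sum_sub_integral_uniformOn hf).measureReal_le_abs_le (by positivity)
    _ = 2 * exp (-2 * T * ε ^ 2) := by
        rcases eq_or_ne T 0 with hT | hT
        · simp [hT]
        · push_cast
          rw [← hTdef]
          field_simp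
          congr 1
          ring

theorem one_sub_le_measureReal_forall_abs_average_sub_integral_le {β : Type*} [Fintype β]
    {f : β → α → ℝ} (hf : ∀ x a, f x a ∈ Set.Icc 0 1) {ε : ℝ} (hε : 0 ≤ ε) :
    1 - Fintype.card β * (2 * exp (-2 * Fintype.card ι * ε ^ 2)) ≤
      (uniformOn .univ).real
        {ω : ι → α | ∀ x, |(∑ i, f x (ω i)) / Fintype.card ι - ∫ a, f x a ∂uniformOn .univ| ≤ ε} := by
  have hcompl : {ω : ι → α | ∀ x,
      |(∑ i, f x (ω i)) / Fintype.card ι - ∫ a, f x a ∂uniformOn .univ| ≤ ε}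
      = (⋃ x, {ω | ε < |(∑ i, f x (ω i)) / Fintype.card ι - ∫ a, f x a ∂uniformOn .univ|})ᶜ := by
    ext ω; simp
  have hunion := measureReal_iUnion_fintype_le (μ := uniformOn (.univ : Set (ι → α)))
    fun x => {ω | ε < |(∑ i, f x (ω i)) / Fintype.card ι - ∫ a, f x a ∂uniformOn .univ|}
  have hterm := fun x => measureReal_lt_abs_average_sub_integral_le (ι := ι) (hf x) hε
  rw [hcompl, probReal_compl_eq_one_sub .of_discrete]
  have := hunion.trans (Finset.sum_le_sum fun x _ => hterm x)
  simp only [Finset.sum_const, Finset.card_univ, nsmul_eq_mul] at this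
  linarith

end ProbabilityTheory

theorem subsample_uniform_concentration_general {C : Type*} (n T : ℕ)
    (Φ : List C) (hΦ : Φ ≠ []) (sat : C → (Fin n → Bool) → Bool)
    (ε δ : ℝ) (hε : 0 < ε) (hδ : 0 < δ)
    (hT : ((n : ℝ) + Real.log 2 + Real.log (1 / δ)) / (2 * ε ^ 2) ≤ (T : ℝ)) :
    (1 - δ ≤
      ((Finset.univ.filter (fun σ : Fin T → Fin Φ.length =>
          ∀ x : Fin n → Bool,
            |((Finset.univ.filter (fun i : Fin T => sat (Φ.get (σ i)) x)).card : ℝ) / T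
              - ((Φ.filter (fun c => sat c x)).length : ℝ) / (Φ.length : ℝ)| ≤ ε)).card : ℝ)
        / (Φ.length : ℝ) ^ T) ∧
    (1 - δ ≤
      ((Finset.univ.filter (fun σ : Fin T → Fin Φ.length =>
          |(⨆ x : Fin n → Bool,
              ((Finset.univ.filter (fun i : Fin T => sat (Φ.get (σ i)) x)).card : ℝ) / T)
            - (⨆ x : Fin n → Bool,
              ((Φ.filter (fun c => sat c x)).length : ℝ) / (Φ.length : ℝ))| ≤ ε)).card : ℝ)
        / (Φ.length : ℝ) ^ T) := by
  have : Nonempty (Fin Φ.length) := ⟨⟨0, List.length_pos_iff.2 hΦ⟩⟩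
  let f (x : Fin n → Bool) (j : Fin Φ.length) : ℝ := if sat (Φ.get j) x then 1 else 0
  have hempirical (σ : Fin T → Fin Φ.length) (x : Fin n → Bool) :
      (#{i | sat (Φ.get (σ i)) x} : ℝ) = ∑ i, f x (σ i) := natCast_card_filter _ _
  have hmean (x : Fin n → Bool) :
      ((Φ.filter (sat · x)).length : ℝ) / Φ.length = ∫ j, f x j ∂uniformOn .univ := by
    rw [integral_uniformOn_univ, List.length_filter_eq_card_filter_get, natCast_card_filter,
      Fintype.card_fin]
  have hgood := one_sub_le_measureReal_forall_abs_average_sub_integral_le (ι := Fin T) (f := f)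
    (fun x j => by unfold f; split_ifs <;> simp) hε.le
  have hδ' := two_pow_mul_two_mul_exp_le hε hδ hT
  have hcard : (Φ.length : ℝ) ^ T = Fintype.card (Fin T → Fin Φ.length) := by simp
  simp only [Fintype.card_fun, Fintype.card_bool, Fintype.card_fin, Nat.cast_pow,
    Nat.cast_ofNat] at hgood
  simp only [hempirical, hmean, hcard]
  rw [← uniformOn_univ_real_setOf, ← uniformOn_univ_real_setOf]
  have hgood' := hgood.trans' (by linarith : 1 - δ ≤ _)
  exact ⟨hgood', hgood'.trans (measureReal_mono fun σ hσ => abs_ciSup_sub_ciSup_le hσ)⟩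

/-- If `T ≥ (n + ln 2 + ln(1/δ)) / (2ε²)` and `Φ'` consists of `T`
constraints sampled i.i.d. uniformly from `Φ` (a sample is a uniform function
`σ : Fin T → Fin Φ.length`), then with probability at least `1 − δ` the values
`val_{Φ'}(x)` and `val_Φ(x)` are `ε`-close simultaneously for all `x ∈ {0,1}^n`;
consequently `|maxval(Φ') − maxval(Φ)| ≤ ε` with probability at least `1 − δ`. -/
theorem subsample_uniform_concentration {C : Type*} (n T : ℕ)
    (Φ : List C) (hΦ : Φ ≠ []) (sat : C → (Fin n → Bool) → Bool)
    (ε δ : ℝ) (hε : 0 < ε) (hε1 : ε < 1) (hδ : 0 < δ) (hδ1 : δ < 1)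
    (hT : ((n : ℝ) + Real.log 2 + Real.log (1 / δ)) / (2 * ε ^ 2) ≤ (T : ℝ)) :
    (1 - δ ≤
      ((Finset.univ.filter (fun σ : Fin T → Fin Φ.length =>
          ∀ x : Fin n → Bool,
            |((Finset.univ.filter (fun i : Fin T => sat (Φ.get (σ i)) x)).card : ℝ) / T
              - ((Φ.filter (fun c => sat c x)).length : ℝ) / (Φ.length : ℝ)| ≤ ε)).card : ℝ)
        / (Φ.length : ℝ) ^ T) ∧
    (1 - δ ≤
      ((Finset.univ.filter (fun σ : Fin T → Fin Φ.length =>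
          |(⨆ x : Fin n → Bool,
              ((Finset.univ.filter (fun i : Fin T => sat (Φ.get (σ i)) x)).card : ℝ) / T)
            - (⨆ x : Fin n → Bool,
              ((Φ.filter (fun c => sat c x)).length : ℝ) / (Φ.length : ℝ))| ≤ ε)).card : ℝ)
        / (Φ.length : ℝ) ^ T) :=
  subsample_uniform_concentration_general n T Φ hΦ sat ε δ hε hδ hT
end

section
/- The Goemans–Williamson constant expression is well-defined and exceeds 0.878: specifically, (2/π)·sup_{0 < θ ≤ π} θ/(1 − cos θ) is attained in (0, π) and its value is greater than 0.878. -/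
/-!
Write `r θ = (2/π)·θ/(1 − cos θ)`. On `(0, 1]` the bound `1 − cos θ ≤ θ²/2` gives `r θ > 1`, while
`r π = 1` and `r (2π/3) = 8/9`; hence a minimiser of `r` on the compact interval `[1, π]` minimises
it on all of `(0, π]` and lies in the interior. For `r > 0.878`, the bound `1 − cos θ ≤ θ²/2`
suffices when `θ ≤ 1.4`; for `θ = π − u` with `u ≤ 1.75` the Taylor bound
`cos u ≤ 1 − u²/2 + u⁴/24` reduces the claim to a polynomial inequality in `u` and `π`.
-/

open Real Set

theorem Real.cos_le_one_sub_sq_div_two_add_pow_four_div (x : ℝ) :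
    cos x ≤ 1 - x ^ 2 / 2 + x ^ 4 / 24 := by
  wlog hx : 0 ≤ x
  · simpa [Even.neg_pow (by decide : Even 4)] using this (-x) (by linarith)
  let f (t : ℝ) : ℝ := 1 - t ^ 2 / 2 + t ^ 4 / 24 - cos t
  have hderiv (t : ℝ) : deriv f t = sin t - (t - t ^ 3 / 6) := by
    simp (disch := fun_prop) [f]
    ring
  have hmono : MonotoneOn f (Ici 0) := by
    refine monotoneOn_of_deriv_nonneg (convex_Ici 0) (by fun_prop) (by fun_prop) fun t ht ↦ ?_
    rw [interior_Ici] at ht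
    rw [hderiv, sub_nonneg]
    exact sin_ge_sub_cube (le_of_lt ht)
  have := hmono self_mem_Ici hx hx
  simp only [f] at this
  norm_num at this
  linarith

theorem Real.one_sub_cos_pos_of_mem_Ioc {θ : ℝ} (hθ : θ ∈ Ioc 0 π) : 0 < 1 - cos θ := by
  simpa using cos_lt_cos_of_nonneg_of_le_pi le_rfl hθ.2 hθ.1

noncomputable def gwRatio (θ : ℝ) : ℝ := 2 / π * θ / (1 - cos θ)

lemma lt_gwRatio_iff {c θ : ℝ} (hθ : θ ∈ Ioc 0 π) :
    c < gwRatio θ ↔ c * π * (1 - cos θ) < 2 * θ := by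
  rw [gwRatio, lt_div_iff₀ (one_sub_cos_pos_of_mem_Ioc hθ), div_mul_eq_mul_div,
    lt_div_iff₀ pi_pos]
  ring_nf

lemma gwRatio_pi : gwRatio π = 1 := by
  rw [gwRatio, cos_pi]
  field_simp
  norm_num

lemma gwRatio_two_pi_div_three : gwRatio (2 * π / 3) = 8 / 9 := by
  rw [gwRatio, show 2 * π / 3 = π - π / 3 by ring, cos_pi_sub, cos_pi_div_three]
  field_simp
  norm_num

lemma continuousOn_gwRatio : ContinuousOn gwRatio (Ioc 0 π) :=
  ContinuousOn.div (by fun_prop) (by fun_prop) fun _ hθ ↦ (one_sub_cos_pos_of_mem_Ioc hθ).ne'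

lemma one_lt_gwRatio {θ : ℝ} (h0 : 0 < θ) (h1 : θ ≤ 1) : 1 < gwRatio θ := by
  rw [lt_gwRatio_iff ⟨h0, h1.trans (by linarith [pi_gt_three])⟩]
  calc 1 * π * (1 - cos θ) ≤ π * (θ ^ 2 / 2) := by
        rw [one_mul]
        gcongr
        linarith [one_sub_sq_div_two_le_cos (x := θ)]
    _ ≤ π * (θ / 2) := by gcongr; nlinarith
    _ < 2 * θ := by nlinarith [pi_lt_four]

lemma exists_isMinOn_gwRatio : ∃ θ₀ ∈ Ioo 0 π, IsMinOn gwRatio (Ioc 0 π) θ₀ := by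
  have hπ := pi_gt_three
  have hsub : Icc 1 π ⊆ Ioc 0 π := Icc_subset_Ioc_iff (by linarith) |>.2 ⟨one_pos, le_rfl⟩
  obtain ⟨θ₀, hθ₀, hmin⟩ := isCompact_Icc.exists_isMinOn (nonempty_Icc.2 (by linarith))
    (continuousOn_gwRatio.mono hsub)
  have hle_one : gwRatio θ₀ ≤ 1 := gwRatio_pi ▸ hmin (right_mem_Icc.2 (by linarith))
  have hne_pi : θ₀ ≠ π := by
    rintro rfl
    have := hmin (show 2 * π / 3 ∈ Icc 1 π from ⟨by linarith, by linarith⟩)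
    simp only [mem_ofPred_eq, gwRatio_pi, gwRatio_two_pi_div_three] at this
    norm_num at this
  refine ⟨θ₀, ⟨by linarith [hθ₀.1], lt_of_le_of_ne hθ₀.2 hne_pi⟩, fun θ hθ ↦ ?_⟩
  rcases le_or_gt 1 θ with hθ1 | hθ1
  · exact hmin ⟨hθ1, hθ.2⟩
  · exact hle_one.trans (one_lt_gwRatio hθ.1 hθ1.le).le

lemma lt_gwRatio_of_le {θ : ℝ} (h0 : 0 < θ) (h1 : θ ≤ 1.4) : 0.878 < gwRatio θ := by
  rw [lt_gwRatio_iff ⟨h0, h1.trans (by linarith [pi_gt_three])⟩]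
  calc 0.878 * π * (1 - cos θ) ≤ 0.878 * π * (θ ^ 2 / 2) := by
        gcongr
        linarith [one_sub_sq_div_two_le_cos (x := θ)]
    _ = 0.439 * π * θ * θ := by ring
    _ < 2 * θ := by gcongr ?_ * θ; nlinarith [pi_lt_d2]

lemma lt_gwRatio_of_pi_sub_le {θ : ℝ} (h1 : π - 1.75 ≤ θ) (h2 : θ ≤ π) :
    0.878 < gwRatio θ := by
  obtain ⟨u, hu0, hu1, rfl⟩ : ∃ u, 0 ≤ u ∧ u ≤ 1.75 ∧ θ = π - u :=
    ⟨π - θ, by linarith, by linarith, by ring⟩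
  rw [lt_gwRatio_iff ⟨by linarith [pi_gt_three], h2⟩, cos_pi_sub]
  have hu2 : u ^ 2 ≤ 1.75 ^ 2 := pow_le_pow_left₀ hu0 hu1 2
  have hpoly_pos : 0 < 0.244 + 0.439 * u ^ 2 - 0.878 * u ^ 4 / 24 := by
    nlinarith [mul_nonneg (sq_nonneg u) (sub_nonneg.2 hu2)]
  have hpoly : 2 * u < 3.141592 * (0.244 + 0.439 * u ^ 2 - 0.878 * u ^ 4 / 24) := by
    -- the polynomial inequality is nearly tight at `u ≈ 0.8156`
    nlinarith [mul_nonneg hu0 (sq_nonneg (u - 0.8156)),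
      mul_nonneg (sub_nonneg.2 hu1) (sq_nonneg (u - 0.8156))]
  calc 0.878 * π * (1 - -cos u) ≤ 0.878 * π * (2 - u ^ 2 / 2 + u ^ 4 / 24) := by
        gcongr
        linarith [cos_le_one_sub_sq_div_two_add_pow_four_div u]
    _ < 2 * (π - u) := by nlinarith [pi_gt_d6]

lemma lt_gwRatio {θ : ℝ} (hθ : θ ∈ Ioc 0 π) : 0.878 < gwRatio θ := by
  rcases le_total θ 1.4 with h | h
  · exact lt_gwRatio_of_le hθ.1 h
  · exact lt_gwRatio_of_pi_sub_le (by linarith [pi_lt_d2]) hθ.2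

/-- The Goemans–Williamson constant
`min_{0 < θ ≤ π} (2/π)·θ/(1 − cos θ)` is attained at some `θ₀ ∈ (0, π)` and its
value exceeds `0.878`. -/
theorem goemans_williamson_constant :
    ∃ θ₀ ∈ Set.Ioo (0 : ℝ) Real.pi,
      (∀ θ ∈ Set.Ioc (0 : ℝ) Real.pi,
        (2 / Real.pi) * θ₀ / (1 - Real.cos θ₀) ≤ (2 / Real.pi) * θ / (1 - Real.cos θ)) ∧
      0.878 < (2 / Real.pi) * θ₀ / (1 - Real.cos θ₀) := by
  obtain ⟨θ₀, hθ₀, hmin⟩ := exists_isMinOn_gwRatio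
  exact ⟨θ₀, hθ₀, fun θ hθ ↦ hmin hθ, lt_gwRatio (Ioo_subset_Ioc_self hθ₀)⟩
end
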